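/- For w ∈ (1/2, 1), V32(w) > V0(w), where V0(w) = (1/31)w^4 + (30/31)(1/15)w^5 + (30/31)(14/15)(1/7)w^6 + (30/31)(14/15)(6/7)(1/3)w^7 + (30/31)(14/15)(6/7)(2/3)w^8 + 2w^5(1−w)(30/31)[1 + (14/15)w + (14/15)(6/7)w^2 + (14/15)(6/7)(2/3)w^3] and V32(w) = (1/15)w^5 + (14/15)(1/7)w^6 + (14/15)(6/7)(1/3)w^7 + (14/15)(6/7)(2/3)w^8 + 2w^5(1−w)[1 + (14/15)w + (14/15)(6/7)w^2 + (14/15)(6/7)(2/3)w^3]. -/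
import Mathlib


noncomputable def V0 (w : ℝ) : ℝ :=
  (1/31) * w^4 + (30/31) * (1/15) * w^5 + (30/31) * (14/15) * (1/7) * w^6 +
    (30/31) * (14/15) * (6/7) * (1/3) * w^7 + (30/31) * (14/15) * (6/7) * (2/3) * w^8 +
    2 * w^5 * (1-w) * (30/31) *
      (1 + (14/15) * w + (14/15) * (6/7) * w^2 + (14/15) * (6/7) * (2/3) * w^3)

noncomputable def V32 (w : ℝ) : ℝ :=
  (1/15) * w^5 + (14/15) * (1/7) * w^6 + (14/15) * (6/7) * (1/3) * w^7 +
    (14/15) * (6/7) * (2/3) * w^8 +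
    2 * w^5 * (1-w) *
      (1 + (14/15) * w + (14/15) * (6/7) * w^2 + (14/15) * (6/7) * (2/3) * w^3)

theorem V32_gt_V0 (w : ℝ) (hw : 1/2 < w) (hw1 : w < 1) : V32 w > V0 w := by
  have h0 : 0 < w := by linarith
  have key : V32 w - V0 w
      = (1/465) * w^4 * (2*w - 1) * (1 - w) * (8*w^3 + 12*w^2 + 14*w + 15) := by
    unfold V32 V0; ring
  have hpos : 0 < (1/465 : ℝ) * w^4 * (2*w - 1) * (1 - w) * (8*w^3 + 12*w^2 + 14*w + 15) := by
    have h1 : 0 < w^4 := pow_pos h0 4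
    have h2 : 0 < 2*w - 1 := by linarith
    have h3 : 0 < 1 - w := by linarith
    have h4 : 0 < 8*w^3 + 12*w^2 + 14*w + 15 := by positivity
    have := mul_pos (mul_pos (mul_pos (mul_pos (by norm_num : (0:ℝ) < 1/465) h1) h2) h3) h4
    linarith
  linarith
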